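/- Let c, r, η be positive real numbers with −1/2 < c − r < −η < 1 + η < c and 0 < η ≤ 1/2, and let J_1 be a positive integer. If θ_{1+η} ≤ 2.1, then, with σ = c + r·cos θ, ∫_0^{θ_{1+η}} log ζ(σ) dθ ≤ ((log ζ(1+η) + log ζ(c))/2)·(θ_{1+η} − π/2) + (π/(4J_1))·log ζ(c) + κ_2(J_1), where κ_2(J_1) = (π/(4J_1))·( log ζ(c+r) + 2·Σ_{j=1}^{J_1−1} log ζ( c + r·cos(πj/(2J_1)) ) ). -/

import Mathlib

open Complex

/-- `θ_y`: `0` if `c + r ≤ y`; `arccos((y-c)/r)` if `c - r ≤ y ≤ c + r`; `π` if `y ≤ c - r`. -/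
noncomputable def thetaY (c r y : ℝ) : ℝ :=
  if c + r ≤ y then 0
  else if c - r ≤ y then Real.arccos ((y - c) / r)
  else Real.pi

/-- `κ₂(J₁) = (π/(4J₁))(log ζ(c+r) + 2 ∑_{j=1}^{J₁-1} log ζ(c + r cos(πj/(2J₁))))`. -/
noncomputable def kappa2 (c r : ℝ) (J₁ : ℕ) : ℝ :=
  Real.pi / (4 * J₁) * (Real.log ‖riemannZeta ((c + r : ℝ) : ℂ)‖
    + 2 * ∑ j ∈ Finset.Icc 1 (J₁ - 1),
        Real.log ‖riemannZeta ((c + r * Real.cos (Real.pi * j / (2 * J₁)) : ℝ) : ℂ)‖)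

/-!
By the Euler product and the power series of `-log (1 - x)`,
`log ζ(c + r cos θ) = ∑_p ∑_{k ≥ 1} p^{-k(c + r cos θ)} / k`, and every summand is a nonnegative
multiple of `exp (-u cos θ)` with `u = k r log p ≥ log 2` (here `r ≥ 1`). Its second derivative
`u exp (-u cos θ) (u sin² θ + cos θ)` is nonnegative for `0 ≤ θ ≤ 2.1`, because `cos 2.1 > -0.507`
and `log 2 · (1 - 0.507²) > 0.507`. So `θ ↦ log ζ(c + r cos θ)` is convex on `[0, θ_{1+η}]`, and
its integral is at most the composite trapezoidal sum with `J₁` steps on `[0, π/2]` plus a single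
trapezoid on `[π/2, θ_{1+η}]`.
-/

open Set
open scoped Real

theorem ConvexOn.tsum {E ι : Type*} [AddCommGroup E] [Module ℝ E] {s : Set E}
    {f : ι → E → ℝ} (hs : Convex ℝ s) (hf : ∀ i, ConvexOn ℝ s (f i))
    (hsum : ∀ x ∈ s, Summable fun i => f i x) :
    ConvexOn ℝ s fun x => ∑' i, f i x := by
  refine ⟨hs, fun x hx y hy a b ha hb hab => ?_⟩
  exact hasSum_le (fun i => (hf i).2 hx hy ha hb hab) (hsum _ (hs hx hy ha hb hab)).hasSum
    (((hsum x hx).hasSum.mul_left a).add ((hsum y hy).hasSum.mul_left b))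

theorem convexOn_exp_neg_mul_cos {s : Set ℝ} (hs : Convex ℝ s) {u : ℝ} (hu : 0 ≤ u)
    (h : ∀ θ ∈ s, 0 ≤ u * Real.sin θ ^ 2 + Real.cos θ) :
    ConvexOn ℝ s fun θ => Real.exp (-(u * Real.cos θ)) := by
  have hf' (θ : ℝ) : HasDerivAt (fun θ => Real.exp (-(u * Real.cos θ)))
      (Real.exp (-(u * Real.cos θ)) * (u * Real.sin θ)) θ := by
    simpa using ((Real.hasDerivAt_cos θ).const_mul u).neg.exp
  have hf'' (θ : ℝ) : HasDerivAt (fun θ => Real.exp (-(u * Real.cos θ)) * (u * Real.sin θ))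
      (u * Real.exp (-(u * Real.cos θ)) * (u * Real.sin θ ^ 2 + Real.cos θ)) θ :=
    ((hf' θ).mul ((Real.hasDerivAt_sin θ).const_mul u)).congr_deriv (by ring)
  refine convexOn_of_hasDerivWithinAt2_nonneg hs (by fun_prop)
    (fun θ _ => (hf' θ).hasDerivWithinAt) (fun θ _ => (hf'' θ).hasDerivWithinAt)
    (fun θ hθ => ?_)
  have := h θ (interior_subset hθ)
  positivity

theorem mul_sin_sq_add_cos_nonneg {u θ : ℝ} (hu : Real.log 2 ≤ u) (hθ : θ ∈ Icc 0 2.1) :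
    0 ≤ u * Real.sin θ ^ 2 + Real.cos θ := by
  have hπ := Real.pi_gt_d2
  have hπ' := Real.pi_lt_d2
  -- `cos` is 1-Lipschitz, `cos (2π/3) = -1/2` and `0 < 2.1 - 2π/3 < 0.007`
  have hcos : -0.507 ≤ Real.cos θ := by
    have h23 : Real.cos (2 * π / 3) = -(1 / 2) := by
      rw [show 2 * π / 3 = π - π / 3 by ring, Real.cos_pi_sub, Real.cos_pi_div_three]
    have hθ21 : Real.cos 2.1 ≤ Real.cos θ :=
      Real.cos_le_cos_of_nonneg_of_le_pi hθ.1 (by linarith) hθ.2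
    have := abs_le.1 (Real.abs_cos_sub_cos_le 2.1 (2 * π / 3))
    rw [abs_of_nonneg (by linarith), h23] at this
    linarith
  have hu' : 0.693 ≤ u := by linarith [Real.log_two_gt_d9]
  rw [Real.sin_sq]
  rcases le_total 0 (Real.cos θ) with h | h
  · nlinarith [Real.cos_sq_le_one θ]
  · nlinarith [mul_nonneg (sub_nonneg.2 hu') (sub_nonneg.2 (Real.cos_sq_le_one θ)),
      mul_nonneg (by linarith : (0 : ℝ) ≤ Real.cos θ + 0.507) (neg_nonneg.2 h)]

theorem convexOn_rpow_neg_add_mul_cos {x c r : ℝ} (hx : 2 ≤ x) (hr : 1 ≤ r) :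
    ConvexOn ℝ (Icc 0 2.1) fun θ => x ^ (-(c + r * Real.cos θ)) := by
  have hlog2 := Real.log_pos one_lt_two
  have hlog : Real.log 2 ≤ r * Real.log x := by
    nlinarith [Real.log_le_log two_pos hx]
  refine ((convexOn_exp_neg_mul_cos (convex_Icc 0 2.1) (by linarith)
    fun θ hθ => mul_sin_sq_add_cos_nonneg hlog hθ).smul
    (Real.exp_pos (-(c * Real.log x))).le).congr fun θ _ => ?_
  simp only [smul_eq_mul, ← Real.exp_add, Real.rpow_def_of_pos (by linarith : 0 < x)]
  ring_nf

theorem convexOn_neg_log_one_sub_rpow {x c r : ℝ} {s : Set ℝ} (hx : 2 ≤ x) (hr : 1 ≤ r)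
    (hs : Convex ℝ s) (hs₂ : s ⊆ Icc 0 2.1) (hσ : ∀ θ ∈ s, 0 < c + r * Real.cos θ) :
    ConvexOn ℝ s fun θ => -Real.log (1 - x ^ (-(c + r * Real.cos θ))) := by
  have hlt (θ : ℝ) (hθ : θ ∈ s) : |x ^ (-(c + r * Real.cos θ))| < 1 := by
    rw [abs_of_nonneg (Real.rpow_nonneg (by linarith) _)]
    exact Real.rpow_lt_one_of_one_lt_of_neg (by linarith) (by linarith [hσ θ hθ])
  have hterm (n : ℕ) :
      ConvexOn ℝ s fun θ => (x ^ (-(c + r * Real.cos θ))) ^ (n + 1) / (n + 1) := by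
    refine (((convexOn_rpow_neg_add_mul_cos (x := x ^ (n + 1)) (c := c) ?_ hr).subset hs₂ hs).smul
      (by positivity : (0 : ℝ) ≤ ((n : ℝ) + 1)⁻¹)).congr fun θ _ => ?_
    · exact hx.trans (le_self_pow₀ (by linarith) n.succ_ne_zero)
    · simp only [smul_eq_mul, Real.rpow_pow_comm (by linarith : 0 ≤ x)]
      ring
  exact (ConvexOn.tsum hs hterm fun θ hθ =>
    (Real.hasSum_pow_div_log_of_abs_lt_one (hlt θ hθ)).summable).congr
    fun θ hθ => (Real.hasSum_pow_div_log_of_abs_lt_one (hlt θ hθ)).tsum_eq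

theorem summable_neg_log_one_sub_prime_rpow {σ : ℝ} (hσ : 1 < σ) :
    Summable fun p : Nat.Primes => -Real.log (1 - (p : ℝ) ^ (-σ)) := by
  have h : Summable fun p : Nat.Primes => (p : ℝ) ^ (-σ) :=
    (Real.summable_nat_rpow.2 (by linarith)).comp_injective Subtype.val_injective
  simpa [sub_eq_add_neg] using (Real.summable_log_one_add_of_summable h.neg).neg

theorem log_norm_riemannZeta_eq_tsum {σ : ℝ} (hσ : 1 < σ) :
    Real.log ‖riemannZeta σ‖ = ∑' p : Nat.Primes, -Real.log (1 - (p : ℝ) ^ (-σ)) := by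
  have hterm (p : Nat.Primes) : -Complex.log (1 - (p : ℂ) ^ (-(σ : ℂ)))
      = ((-Real.log (1 - (p : ℝ) ^ (-σ)) : ℝ) : ℂ) := by
    have hp : (p : ℝ) ^ (-σ) < 1 :=
      Real.rpow_lt_one_of_one_lt_of_neg (by exact_mod_cast p.prop.one_lt) (by linarith)
    rw [ofReal_neg, ofReal_log (by linarith), ofReal_sub, ofReal_one,
      ofReal_cpow (Nat.cast_nonneg _)]
    push_cast
    rfl
  rw [← riemannZeta_eulerProduct_exp_log (by simpa using hσ), tsum_congr hterm, ← ofReal_tsum,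
    ← ofReal_exp, norm_real, Real.norm_of_nonneg (Real.exp_pos _).le, Real.log_exp]

theorem continuousOn_log_norm_riemannZeta :
    ContinuousOn (fun σ : ℝ => Real.log ‖riemannZeta σ‖) (Ioi 1) := by
  intro σ hσ
  have hσ' : 1 < (σ : ℂ).re := by simpa using hσ
  refine ContinuousAt.continuousWithinAt (ContinuousAt.log ?_ ?_)
  · exact ((differentiableAt_riemannZeta fun h => by simp [h] at hσ').continuousAt.comp
      continuous_ofReal.continuousAt).norm
  · exact norm_ne_zero_iff.2 (riemannZeta_ne_zero_of_one_lt_re hσ')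

theorem convexOn_log_norm_riemannZeta_add_mul_cos {c r : ℝ} {s : Set ℝ} (hr : 1 ≤ r)
    (hs : Convex ℝ s) (hs₂ : s ⊆ Icc 0 2.1) (hσ : ∀ θ ∈ s, 1 < c + r * Real.cos θ) :
    ConvexOn ℝ s fun θ => Real.log ‖riemannZeta ((c + r * Real.cos θ : ℝ) : ℂ)‖ :=
  (ConvexOn.tsum hs
    (fun p => convexOn_neg_log_one_sub_rpow (by exact_mod_cast p.prop.two_le) hr hs hs₂
      fun θ hθ => by linarith [hσ θ hθ])
    fun θ hθ => summable_neg_log_one_sub_prime_rpow (hσ θ hθ)).congr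
    fun θ hθ => (log_norm_riemannZeta_eq_tsum (hσ θ hθ)).symm

theorem ConvexOn.integral_le_trapezoid {f : ℝ → ℝ} {a b : ℝ} (hab : a ≤ b)
    (hf : ConvexOn ℝ (Icc a b) f) (hf' : ContinuousOn f (Icc a b)) :
    ∫ x in a..b, f x ≤ (f a + f b) / 2 * (b - a) := by
  rcases hab.eq_or_lt with rfl | hab
  · simp
  set chord : ℝ → ℝ := fun x => ((b - x) * f a + (x - a) * f b) / (b - a)
  have hle : ∀ x ∈ Icc a b, f x ≤ chord x := fun x hx => by
    have h := hf.2 (left_mem_Icc.2 hab.le) (right_mem_Icc.2 hab.le)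
      (div_nonneg (sub_nonneg.2 hx.2) (sub_nonneg.2 hab.le))
      (div_nonneg (sub_nonneg.2 hx.1) (sub_nonneg.2 hab.le))
      (by field_simp; ring)
    have hx : ((b - x) / (b - a)) • a + ((x - a) / (b - a)) • b = x := by
      simp only [smul_eq_mul]; field_simp; ring
    rw [hx] at h
    exact h.trans_eq (by simp only [chord, smul_eq_mul]; ring)
  have hchord : Continuous chord := by simp only [chord]; fun_prop
  have hG (x : ℝ) : HasDerivAt
      (fun x => ((x - a) ^ 2 * f b - (b - x) ^ 2 * f a) / (2 * (b - a))) (chord x) x :=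
    (((((hasDerivAt_id x).sub_const a).pow 2).mul_const (f b)).sub
      ((((hasDerivAt_id x).const_sub b).pow 2).mul_const (f a))).div_const
      (2 * (b - a)) |>.congr_deriv (by simp only [chord, id]; field_simp; ring)
  calc ∫ x in a..b, f x ≤ ∫ x in a..b, chord x :=
        intervalIntegral.integral_mono_on hab.le
          (hf'.intervalIntegrable_of_Icc hab.le) (hchord.intervalIntegrable a b) hle
    _ = (f a + f b) / 2 * (b - a) := by
        rw [intervalIntegral.integral_eq_sub_of_hasDerivAt (fun x _ => hG x)
          (hchord.intervalIntegrable a b)]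
        field_simp
        ring

theorem Finset.sum_range_add_comp_succ {M : Type*} [AddCommMonoid M] (g : ℕ → M) {n : ℕ}
    (hn : 0 < n) :
    ∑ k ∈ range n, (g k + g (k + 1)) = g 0 + g n + 2 • ∑ k ∈ Icc 1 (n - 1), g k := by
  obtain ⟨m, rfl⟩ := Nat.exists_eq_succ_of_ne_zero hn.ne'
  have hIcc : ∑ k ∈ Icc 1 m, g k = ∑ k ∈ range m, g (k + 1) := by
    rw [← Ico_add_one_right_eq_Icc, sum_Ico_eq_sum_range, add_tsub_cancel_right]
    simp only [add_comm 1]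
  rw [sum_add_distrib, sum_range_succ' g, sum_range_succ (fun k => g (k + 1)),
    Nat.succ_sub_one, hIcc, two_nsmul]
  abel

theorem ConvexOn.integral_le_composite_trapezoid {f : ℝ → ℝ} {a h : ℝ} {n : ℕ} (hh : 0 ≤ h)
    (hn : 0 < n) (hf : ConvexOn ℝ (Icc a (a + n * h)) f)
    (hf' : ContinuousOn f (Icc a (a + n * h))) :
    ∫ x in a..a + n * h, f x
      ≤ h / 2 * (f a + f (a + n * h) + 2 * ∑ k ∈ Finset.Icc 1 (n - 1), f (a + k * h)) := by
  set x : ℕ → ℝ := fun k => a + k * h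
  have hx : Monotone x := fun j k hjk => by
    simp only [x]; gcongr
  have hsub {k : ℕ} (hk : k < n) : Icc (x k) (x (k + 1)) ⊆ Icc a (a + n * h) :=
    Icc_subset_Icc (by simpa [x] using hx k.zero_le) (hx hk)
  calc ∫ y in a..a + n * h, f y = ∑ k ∈ Finset.range n, ∫ y in x k..x (k + 1), f y := by
        rw [intervalIntegral.sum_integral_adjacent_intervals fun k hk =>
          (hf'.mono (hsub hk)).intervalIntegrable_of_Icc (hx k.le_succ)]
        simp [x]
    _ ≤ ∑ k ∈ Finset.range n, (f (x k) + f (x (k + 1))) / 2 * h := by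
        refine Finset.sum_le_sum fun k hk => ?_
        have hk := Finset.mem_range.1 hk
        refine ((hf.subset (hsub hk) (convex_Icc _ _)).integral_le_trapezoid (hx k.le_succ)
          (hf'.mono (hsub hk))).trans_eq ?_
        simp only [x]; push_cast; ring
    _ = _ := by
        rw [← Finset.sum_mul, ← Finset.sum_div,
          Finset.sum_range_add_comp_succ (fun k => f (x k)) hn]
        simp only [x, nsmul_eq_mul, Nat.cast_ofNat, Nat.cast_zero, zero_mul, add_zero]
        ring

section thetaY

variable {c r y : ℝ}

theorem thetaY_le_pi : thetaY c r y ≤ π := by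
  unfold thetaY
  split_ifs
  exacts [Real.pi_pos.le, Real.arccos_le_pi _, le_rfl]

theorem pi_div_two_le_thetaY (hr : 0 < r) (hy : y ≤ c) : π / 2 ≤ thetaY c r y := by
  unfold thetaY
  rw [if_neg (by linarith)]
  split_ifs
  · rw [Real.arccos_eq_pi_div_two_sub_arcsin]
    linarith [Real.arcsin_nonpos.2 (div_nonpos_of_nonpos_of_nonneg (sub_nonpos.2 hy) hr.le)]
  · linarith [Real.pi_pos]

theorem add_mul_cos_thetaY (hr : 0 < r) (h₁ : c - r ≤ y) (h₂ : y ≤ c + r) :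
    c + r * Real.cos (thetaY c r y) = y := by
  unfold thetaY
  split_ifs
  · rw [Real.cos_zero]; linarith
  · rw [Real.cos_arccos (by rw [le_div_iff₀ hr]; linarith) (by rw [div_le_one hr]; linarith)]
    field_simp
    ring

theorem le_add_mul_cos_of_le_thetaY (hr : 0 < r) (h₁ : c - r ≤ y) (h₂ : y ≤ c + r) {θ : ℝ}
    (hθ : θ ∈ Icc 0 (thetaY c r y)) : y ≤ c + r * Real.cos θ := by
  conv_lhs => rw [← add_mul_cos_thetaY hr h₁ h₂]
  gcongr
  exact Real.cos_le_cos_of_nonneg_of_le_pi hθ.1 thetaY_le_pi hθ.2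

end thetaY

theorem zeta_integral_bound_first_general (c r η : ℝ) (hη₀ : 0 < η)
    (h₂ : c - r < -η) (h₃ : 1 + η < c)
    (J₁ : ℕ) (hJ₁ : 0 < J₁)
    (hθ : thetaY c r (1 + η) ≤ 2.1) :
    (∫ θ in (0 : ℝ)..(thetaY c r (1 + η)),
        Real.log ‖riemannZeta ((c + r * Real.cos θ : ℝ) : ℂ)‖)
      ≤ (Real.log ‖riemannZeta ((1 + η : ℝ) : ℂ)‖ + Real.log ‖riemannZeta ((c : ℝ) : ℂ)‖) / 2
          * (thetaY c r (1 + η) - Real.pi / 2)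
        + Real.pi / (4 * J₁) * Real.log ‖riemannZeta ((c : ℝ) : ℂ)‖
        + kappa2 c r J₁ := by
  set F : ℝ → ℝ := fun θ => Real.log ‖riemannZeta ((c + r * Real.cos θ : ℝ) : ℂ)‖
  set T := thetaY c r (1 + η)
  have hr : 1 ≤ r := by linarith
  have hT : π / 2 ≤ T := pi_div_two_le_thetaY (by linarith) h₃.le
  have hFT : c + r * Real.cos T = 1 + η :=
    add_mul_cos_thetaY (by linarith) (by linarith) (by linarith)
  have hσ (θ : ℝ) (hθ : θ ∈ Icc 0 T) : 1 < c + r * Real.cos θ := by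
    linarith [le_add_mul_cos_of_le_thetaY (by linarith) (by linarith) (by linarith) hθ]
  have hconv : ConvexOn ℝ (Icc 0 T) F :=
    convexOn_log_norm_riemannZeta_add_mul_cos hr (convex_Icc 0 T) (Icc_subset_Icc le_rfl hθ) hσ
  have hcont : ContinuousOn F (Icc 0 T) :=
    continuousOn_log_norm_riemannZeta.comp (by fun_prop) hσ
  have hsub₁ : Icc 0 (π / 2) ⊆ Icc 0 T := Icc_subset_Icc le_rfl hT
  have hsub₂ : Icc (π / 2) T ⊆ Icc 0 T := Icc_subset_Icc (by positivity) le_rfl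
  have hleft : ∫ θ in 0..π / 2, F θ ≤ π / (2 * J₁) / 2 *
      (F 0 + F (π / 2) + 2 * ∑ j ∈ Finset.Icc 1 (J₁ - 1), F (π * j / (2 * J₁))) := by
    have hnode (k : ℕ) : 0 + k * (π / (2 * J₁)) = π * k / (2 * J₁) := by ring
    have hend : π * J₁ / (2 * J₁) = π / 2 := by field_simp
    have := ConvexOn.integral_le_composite_trapezoid (f := F) (a := 0) (h := π / (2 * J₁))
      (by positivity) hJ₁
    simp only [hnode, hend] at this
    exact this (hconv.subset hsub₁ (convex_Icc _ _)) (hcont.mono hsub₁)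
  have hright :=
    (hconv.subset hsub₂ (convex_Icc _ _)).integral_le_trapezoid hT (hcont.mono hsub₂)
  rw [← intervalIntegral.integral_add_adjacent_intervals
    ((hcont.mono hsub₁).intervalIntegrable_of_Icc (by positivity))
    ((hcont.mono hsub₂).intervalIntegrable_of_Icc hT)]
  simp only [F, kappa2, hFT, Real.cos_zero, Real.cos_pi_div_two, mul_one, mul_zero, add_zero]
    at hleft hright ⊢
  linear_combination hleft + hright

/-- **Lemma 3.14, first bound.** If `θ_{1+η} ≤ 2.1`, then for `σ = c + r cos θ`,
`∫₀^{θ_{1+η}} log ζ(σ) dθ ≤ ((log ζ(1+η) + log ζ(c))/2)(θ_{1+η} - π/2)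
  + (π/(4J₁)) log ζ(c) + κ₂(J₁)`. -/
theorem zeta_integral_bound_first (c r η : ℝ) (hc : 0 < c) (hr : 0 < r) (hη₀ : 0 < η)
    (h₁ : -(1 / 2) < c - r) (h₂ : c - r < -η) (h₃ : 1 + η < c) (hη₁ : η ≤ 1 / 2)
    (J₁ : ℕ) (hJ₁ : 0 < J₁)
    (hθ : thetaY c r (1 + η) ≤ 2.1) :
    (∫ θ in (0 : ℝ)..(thetaY c r (1 + η)),
        Real.log ‖riemannZeta ((c + r * Real.cos θ : ℝ) : ℂ)‖)
      ≤ (Real.log ‖riemannZeta ((1 + η : ℝ) : ℂ)‖ + Real.log ‖riemannZeta ((c : ℝ) : ℂ)‖) / 2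
          * (thetaY c r (1 + η) - Real.pi / 2)
        + Real.pi / (4 * J₁) * Real.log ‖riemannZeta ((c : ℝ) : ℂ)‖
        + kappa2 c r J₁ :=
  zeta_integral_bound_first_general c r η hη₀ h₂ h₃ J₁ hJ₁ hθ
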